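/- Let f : ℝ → [0, ∞] be Borel measurable and y > 0, and set M := sup_{u ∈ (y/2, y)} f(u). Then ∫_{x=0}^{y} ∫_{u=y−x}^{y} f(u) f(x) du dx ≤ 2 M ∫_{0}^{y/2} x f(x) dx + ((y/2) · M)². In particular, if M < ∞ and ∫_{0}^{y/2} x f(x) dx < ∞, then this double integral is finite. -/

import Mathlib

/-!
Split the outer variable at `y / 2`. For `x < y / 2` the inner variable `u` lies in
`(y / 2, y)`, where `f u ≤ M`, on an interval of length `x`; this gives `M ∫₀^{y/2} x f(x) dx`.
For `x > y / 2` bound `f x ≤ M` instead and split the inner interval at `y / 2`: the part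
`(y / 2, y)` contributes `(M y / 2)²`, and by Tonelli the part `(y - x, y / 2)` again gives
`M ∫₀^{y/2} u f(u) du`, since for fixed `u ∈ (0, y / 2)` the admissible `x ∈ (y - u, y)` form
an interval of length `u`.
-/

open MeasureTheory Set ENNReal

lemma setLIntegral_Ioo_le_mul_of_le {g : ℝ → ℝ≥0∞} {a b : ℝ} {M : ℝ≥0∞}
    (h : ∀ u ∈ Ioo a b, g u ≤ M) :
    (∫⁻ u in Ioo a b, g u) ≤ M * ENNReal.ofReal (b - a) :=
  (setLIntegral_mono measurable_const h).trans_eq (by rw [setLIntegral_const, Real.volume_Ioo])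

lemma setLIntegral_Ioo_eq_add {g : ℝ → ℝ≥0∞} {a b c : ℝ} (hac : a < c) (hcb : c ≤ b) :
    ∫⁻ u in Ioo a b, g u = (∫⁻ u in Ioo a c, g u) + ∫⁻ u in Ioo c b, g u := by
  have hdisj : Disjoint (Ioo a c) (Ico c b) :=
    disjoint_left.2 fun _ hu hu' => lt_irrefl _ (hu.2.trans_le hu'.1)
  rw [← Ioo_union_Ico_eq_Ioo hac hcb, lintegral_union measurableSet_Ico hdisj,
    setLIntegral_congr (Ioo_ae_eq_Ico : Ioo c b =ᵐ[volume] Ico c b)]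

lemma lintegral_Ioo_half_lintegral_Ioo_sub_half {g : ℝ → ℝ≥0∞} (hg : Measurable g) (y : ℝ) :
    ∫⁻ x in Ioo (y / 2) y, ∫⁻ u in Ioo (y - x) (y / 2), g u
      = ∫⁻ u in Ioo 0 (y / 2), ENNReal.ofReal u * g u := by
  have inner : EqOn (fun x => ∫⁻ u in Ioo (y - x) (y / 2), g u)
      (fun x => ∫⁻ u in Ioo 0 (y / 2), (Ioi (y - x)).indicator g u) (Ioo (y / 2) y) := by
    intro x hx
    dsimp only
    rw [lintegral_indicator measurableSet_Ioi, Measure.restrict_restrict measurableSet_Ioi,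
      Ioi_inter_Ioo, max_eq_left (by linarith [hx.2])]
  have outer : EqOn (fun u => ∫⁻ x in Ioo (y / 2) y, (Ioi (y - x)).indicator g u)
      (fun u => ENNReal.ofReal u * g u) (Ioo 0 (y / 2)) := by
    intro u hu
    have hswap : (fun x => (Ioi (y - x)).indicator g u) = (Ioi (y - u)).indicator fun _ => g u := by
      ext x
      simp only [indicator_apply, mem_Ioi, sub_lt_comm]
    simp only [hswap]
    rw [lintegral_indicator measurableSet_Ioi, Measure.restrict_restrict measurableSet_Ioi,
      Ioi_inter_Ioo, max_eq_left (by linarith [hu.2]), setLIntegral_const, Real.volume_Ioo,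
      _root_.sub_sub_cancel, mul_comm]
  have hmeas : Measurable (Function.uncurry fun x u => (Ioi (y - x)).indicator g u) := by
    have : (Function.uncurry fun x u => (Ioi (y - x)).indicator g u)
        = {p : ℝ × ℝ | y - p.1 < p.2}.indicator (g ∘ Prod.snd) := by
      ext p
      simp only [Function.uncurry, indicator_apply, mem_Ioi, mem_ofPred_eq, Function.comp]
    rw [this]
    exact (hg.comp measurable_snd).indicator
      (measurableSet_lt (measurable_const.sub measurable_fst) measurable_snd)
  rw [setLIntegral_congr_fun measurableSet_Ioo inner, lintegral_lintegral_swap hmeas.aemeasurable,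
    setLIntegral_congr_fun measurableSet_Ioo outer]

section DoubleIntegral

variable {f : ℝ → ℝ≥0∞} {y : ℝ} {M : ℝ≥0∞}

lemma lintegral_Ioo_zero_half_lintegral_Ioo_sub_le (hf : Measurable f)
    (hM : ∀ u ∈ Ioo (y / 2) y, f u ≤ M) :
    ∫⁻ x in Ioo 0 (y / 2), ∫⁻ u in Ioo (y - x) y, f u * f x
      ≤ M * ∫⁻ x in Ioo 0 (y / 2), ENNReal.ofReal x * f x := by
  have hinner : ∀ x ∈ Ioo 0 (y / 2),
      (∫⁻ u in Ioo (y - x) y, f u * f x) ≤ M * (ENNReal.ofReal x * f x) := by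
    intro x hx
    have hle : ∀ u ∈ Ioo (y - x) y, f u * f x ≤ M * f x := fun u hu =>
      mul_le_mul_left (hM u ⟨by linarith [hx.2, hu.1], hu.2⟩) _
    calc (∫⁻ u in Ioo (y - x) y, f u * f x) ≤ M * f x * ENNReal.ofReal (y - (y - x)) :=
          setLIntegral_Ioo_le_mul_of_le hle
      _ = M * (ENNReal.ofReal x * f x) := by rw [_root_.sub_sub_cancel]; ring
  calc ∫⁻ x in Ioo 0 (y / 2), ∫⁻ u in Ioo (y - x) y, f u * f x
      ≤ ∫⁻ x in Ioo 0 (y / 2), M * (ENNReal.ofReal x * f x) :=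
        setLIntegral_mono' measurableSet_Ioo hinner
    _ = M * ∫⁻ x in Ioo 0 (y / 2), ENNReal.ofReal x * f x :=
        lintegral_const_mul M (by fun_prop)

lemma lintegral_Ioo_half_lintegral_Ioo_sub_le (hf : Measurable f)
    (hM : ∀ u ∈ Ioo (y / 2) y, f u ≤ M) :
    ∫⁻ x in Ioo (y / 2) y, ∫⁻ u in Ioo (y - x) y, f u * f x
      ≤ M * (∫⁻ x in Ioo 0 (y / 2), ENNReal.ofReal x * f x)
        + (ENNReal.ofReal (y / 2) * M) ^ 2 := by
  have hinner : ∀ x ∈ Ioo (y / 2) y, (∫⁻ u in Ioo (y - x) y, f u * f x)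
      ≤ (∫⁻ u in Ioo (y - x) (y / 2), M * f u) + M * M * ENNReal.ofReal (y / 2) := by
    intro x hx
    have hfar : (∫⁻ u in Ioo (y / 2) y, f u) ≤ M * ENNReal.ofReal (y / 2) := by
      simpa only [_root_.sub_half] using setLIntegral_Ioo_le_mul_of_le hM
    calc (∫⁻ u in Ioo (y - x) y, f u * f x) ≤ ∫⁻ u in Ioo (y - x) y, M * f u :=
          setLIntegral_mono' measurableSet_Ioo fun u _ => by
            rw [mul_comm]; exact mul_le_mul_left (hM x hx) _
      _ = (∫⁻ u in Ioo (y - x) (y / 2), M * f u) + M * ∫⁻ u in Ioo (y / 2) y, f u := by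
          rw [setLIntegral_Ioo_eq_add (c := y / 2) (by linarith [hx.1]) (by linarith [hx.1, hx.2])]
          congr 1
          exact lintegral_const_mul M hf
      _ ≤ (∫⁻ u in Ioo (y - x) (y / 2), M * f u) + M * M * ENNReal.ofReal (y / 2) := by
          rw [mul_assoc]; gcongr
  calc ∫⁻ x in Ioo (y / 2) y, ∫⁻ u in Ioo (y - x) y, f u * f x
      ≤ ∫⁻ x in Ioo (y / 2) y,
          ((∫⁻ u in Ioo (y - x) (y / 2), M * f u) + M * M * ENNReal.ofReal (y / 2)) :=
        setLIntegral_mono' measurableSet_Ioo hinner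
    _ = (∫⁻ u in Ioo 0 (y / 2), ENNReal.ofReal u * (M * f u))
          + M * M * ENNReal.ofReal (y / 2) * ENNReal.ofReal (y / 2) := by
        rw [lintegral_add_right _ measurable_const, setLIntegral_const, Real.volume_Ioo,
          _root_.sub_half, lintegral_Ioo_half_lintegral_Ioo_sub_half (hf.const_mul M)]
    _ = M * (∫⁻ x in Ioo 0 (y / 2), ENNReal.ofReal x * f x)
          + (ENNReal.ofReal (y / 2) * M) ^ 2 := by
        simp only [mul_left_comm _ M]
        rw [lintegral_const_mul M (by fun_prop)]
        ring

lemma lintegral_Ioo_lintegral_Ioo_sub_le (hf : Measurable f) (hy : 0 < y)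
    (hM : ∀ u ∈ Ioo (y / 2) y, f u ≤ M) :
    ∫⁻ x in Ioo 0 y, ∫⁻ u in Ioo (y - x) y, f u * f x
      ≤ 2 * M * (∫⁻ x in Ioo 0 (y / 2), ENNReal.ofReal x * f x)
        + (ENNReal.ofReal (y / 2) * M) ^ 2 := by
  rw [setLIntegral_Ioo_eq_add (half_pos hy) (half_le_self hy.le)]
  calc _ ≤ M * (∫⁻ x in Ioo 0 (y / 2), ENNReal.ofReal x * f x)
          + (M * (∫⁻ x in Ioo 0 (y / 2), ENNReal.ofReal x * f x)
            + (ENNReal.ofReal (y / 2) * M) ^ 2) :=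
        add_le_add (lintegral_Ioo_zero_half_lintegral_Ioo_sub_le hf hM)
          (lintegral_Ioo_half_lintegral_Ioo_sub_le hf hM)
    _ = _ := by ring

end DoubleIntegral

/-- Bound on the double integral appearing in the second-order coefficient `d₂`:
with `M = sup_{u ∈ (y/2, y)} f(u)`,
`∫_{x=0}^{y} ∫_{u=y−x}^{y} f(u) f(x) du dx ≤ 2 M ∫_0^{y/2} x f(x) dx + ((y/2) M)²`;
in particular, if `M < ∞` and `∫_0^{y/2} x f(x) dx < ∞`, the double integral is finite. -/
theorem double_integral_bound_and_finiteness
    (f : ℝ → ℝ≥0∞) (hf : Measurable f) (y : ℝ) (hy : 0 < y) :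
    (∫⁻ x in Set.Ioo (0 : ℝ) y, ∫⁻ u in Set.Ioo (y - x) y, f u * f x)
      ≤ 2 * (⨆ u ∈ Set.Ioo (y / 2) y, f u)
          * (∫⁻ x in Set.Ioo (0 : ℝ) (y / 2), ENNReal.ofReal x * f x)
        + (ENNReal.ofReal (y / 2) * (⨆ u ∈ Set.Ioo (y / 2) y, f u)) ^ 2
    ∧ ((⨆ u ∈ Set.Ioo (y / 2) y, f u) < ⊤ →
        (∫⁻ x in Set.Ioo (0 : ℝ) (y / 2), ENNReal.ofReal x * f x) < ⊤ →
        (∫⁻ x in Set.Ioo (0 : ℝ) y, ∫⁻ u in Set.Ioo (y - x) y, f u * f x) < ⊤) := by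
  have hbound := lintegral_Ioo_lintegral_Ioo_sub_le hf hy fun u hu => le_biSup f hu
  refine ⟨hbound, fun hM hI => hbound.trans_lt ?_⟩
  exact add_lt_top.2 ⟨mul_lt_top (mul_lt_top ofNat_lt_top hM) hI,
    pow_lt_top (mul_lt_top ofReal_lt_top hM)⟩
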